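/- Let r ≥ 1 and let G be a ℚ_p-valued measure on (ℤ_p)^r satisfying the symmetry G(A) − G(−A) + G(1−A) − G(A−1) = 0 (coordinatewise affine maps) as in the Euler-relation setting. Fix nonnegative integers n₁,…,n_r with sum m and a residue vector (i₁,…,i_r) ∈ (ℤ/p^nℤ)^r. Then ∫_{(i₁,…,i_r)+p^n(ℤ_p)^r} φ dG + (−1)^{m+1} ∫_{(−i₁,…,−i_r)+p^n(ℤ_p)^r} φ dG + (−1)^m ∫_{(−i₁+1,…,−i_r+1)+p^n(ℤ_p)^r} φ₋ dG − ∫_{(i₁−1,…,i_r−1)+p^n(ℤ_p)^r} φ₊ dG = 0, where φ(x) = (x₁−x₂)^{n₁}⋯(x_{r−1}−x_r)^{n_{r−1}} x_r^{n_r}, φ₋(x) = (x₁−x₂)^{n₁}⋯(x_{r−1}−x_r)^{n_{r−1}}(x_r−1)^{n_r}, and φ₊(x) = (x₁−x₂)^{n₁}⋯(x_{r−1}−x_r)^{n_{r−1}}(x_r+1)^{n_r}. -/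

import Mathlib

open Filter Topology

/-- A `ℚ_p`-valued measure on `(ℤ_p)^r`: a compatible bounded family of functions
on `(ℤ/p^nℤ)^r`. -/
structure PadicMeasureV (p : ℕ) [Fact p.Prime] (r : ℕ) where
  val : ∀ n : ℕ, (Fin r → ZMod (p ^ n)) → ℚ_[p]
  compat : ∀ (n : ℕ) (x : Fin r → ZMod (p ^ n)),
    val n x = ∑ y ∈ Finset.univ.filter
      (fun y : Fin r → ZMod (p ^ (n + 1)) =>
        (fun j => ZMod.castHom (pow_dvd_pow p (Nat.le_succ n)) (ZMod (p ^ n)) (y j)) = x),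
      val (n + 1) y
  bounded : ∃ C : ℝ, ∀ (n : ℕ) (x : Fin r → ZMod (p ^ n)), ‖val n x‖ ≤ C
/-- Riemann sum of level `n` of `f` against the measure. -/
noncomputable def PadicMeasureV.riemannSum {p : ℕ} [Fact p.Prime] {r : ℕ}
    (μ : PadicMeasureV p r) (f : (Fin r → ℤ_[p]) → ℚ_[p]) (n : ℕ) : ℚ_[p] :=
  ∑ i : Fin r → ZMod (p ^ n), f (fun j => ((i j).val : ℤ_[p])) * μ.val n i

/-- `∫_{i + p^n (ℤ_p)^r} f dμ = c`: Riemann sums restricted to the residue class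
`(i₁,…,i_r) + p^n(ℤ_p)^r`. -/
def PadicMeasureV.HasIntegralOn {p : ℕ} [Fact p.Prime] {r : ℕ}
    (μ : PadicMeasureV p r) (f : (Fin r → ℤ_[p]) → ℚ_[p])
    (n : ℕ) (i : Fin r → ZMod (p ^ n)) (c : ℚ_[p]) : Prop :=
  Filter.Tendsto (fun k : ℕ =>
      ∑ y ∈ Finset.univ.filter
        (fun y : Fin r → ZMod (p ^ (n + k)) =>
          (fun j => ZMod.castHom (pow_dvd_pow p (Nat.le_add_right n k)) (ZMod (p ^ n)) (y j))
            = i),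
        f (fun j => ((y j).val : ℤ_[p])) * μ.val (n + k) y)
    Filter.atTop (nhds c)

/-
Reindex the Riemann sums of the last three integrals by the level-wise changes of variables
`z ↦ -z`, `z ↦ 1 - z`, `z ↦ z - 1`, which map the coset of `i` onto the cosets of `-i`, `1 - i`,
`i - 1`. At a point `z` of level `N`, the integrands then agree modulo `p^N` with
`(-1)^m φ(z)`, `(-1)^m φ(z)` and `φ(z)`, since `φ` is a polynomial with integral coefficients;
so the combined summand is `φ(z)` times the symmetry defect of `G` at `z`, which vanishes, plus
an error of norm at most `p^{-N} C` (`C` a bound for `G`) by the ultrametric inequality.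
Summing, ultrametrically again, bounds the combined Riemann sum of level `n + k` by
`p^{-(n+k)} C → 0`.
-/

variable {p : ℕ} [Fact p.Prime]

section ChainMonomial

variable {R S : Type*} [CommRing R] [CommRing S] {r : ℕ}

/-- The integrands `φ`, `φ₋`, `φ₊` are `chainMonomial e c` for `c = 0, -1, 1`. -/
def chainMonomial (e : Fin (r + 1) → ℕ) (c : R) (x : Fin (r + 1) → R) : R :=
  (∏ j : Fin r, (x j.castSucc - x j.succ) ^ e j.castSucc) * (x (Fin.last r) + c) ^ e (Fin.last r)

theorem map_chainMonomial (f : R →+* S) (e : Fin (r + 1) → ℕ) (c : R) (x : Fin (r + 1) → R) :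
    f (chainMonomial e c x) = chainMonomial e (f c) (fun j => f (x j)) := by
  simp only [chainMonomial, map_mul, map_prod, map_pow, map_sub, map_add]

theorem chainMonomial_add_const (e : Fin (r + 1) → ℕ) (c t : R) (x : Fin (r + 1) → R) :
    chainMonomial e c (fun j => x j + t) = chainMonomial e (t + c) x := by
  simp only [chainMonomial, add_sub_add_right_eq_sub, add_assoc]

theorem chainMonomial_neg (e : Fin (r + 1) → ℕ) (c : R) (x : Fin (r + 1) → R) :
    chainMonomial e c (-x) = (-1) ^ (∑ j, e j) * chainMonomial e (-c) x := by
  have hdiff : ∀ j : Fin r, (-x j.castSucc - -x j.succ) ^ e j.castSucc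
      = (-1) ^ e j.castSucc * (x j.castSucc - x j.succ) ^ e j.castSucc :=
    fun j => by rw [← mul_pow]; ring
  have hlast : (-x (Fin.last r) + c) ^ e (Fin.last r)
      = (-1) ^ e (Fin.last r) * (x (Fin.last r) + -c) ^ e (Fin.last r) := by
    rw [← mul_pow]; ring
  simp only [chainMonomial, Pi.neg_apply, hdiff, hlast, Finset.prod_mul_distrib,
    Finset.prod_pow_eq_pow_sum, Fin.sum_univ_castSucc, pow_add]
  ring

end ChainMonomial

theorem sum_fiber_eq_sum_fiber_comp_of_semiconj {ι α β M : Type*} [Fintype ι] [DecidableEq ι]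
    [Fintype α] [DecidableEq β] [AddCommMonoid M] (π : α → β) {σ : α → α} {τ : β → β}
    (hσ : σ.Bijective) (hτ : τ.Injective) (hπ : Function.Semiconj π σ τ) (i : ι → β)
    (F : (ι → α) → M) :
    ∑ y ∈ Finset.univ.filter (fun y : ι → α => (fun j => π (y j)) = fun j => τ (i j)), F y
      = ∑ z ∈ Finset.univ.filter (fun z : ι → α => (fun j => π (z j)) = i),
          F (fun j => σ (z j)) := by
  refine (Finset.sum_bijective (fun (z : ι → α) j => σ (z j))
    (Function.Bijective.piMap fun _ => hσ) (fun z => ?_) (fun _ _ => rfl)).symm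
  simp only [Finset.mem_filter, Finset.mem_univ, true_and, hπ.eq, funext_iff]
  exact ⟨fun h j => congrArg τ (h j), fun h j => hτ (h j)⟩

theorem norm_symmetric_combination_le {𝕜 : Type*} [NormedField 𝕜] [IsUltrametricDist 𝕜]
    (m : ℕ) {a b₂ b₃ b₄ g₁ g₂ g₃ g₄ : 𝕜} {δ C : ℝ} (hg : g₁ - g₂ + g₃ - g₄ = 0)
    (hb₂ : ‖b₂ - (-1) ^ m * a‖ ≤ δ) (hb₃ : ‖b₃ - (-1) ^ m * a‖ ≤ δ) (hb₄ : ‖b₄ - a‖ ≤ δ)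
    (hg₂ : ‖g₂‖ ≤ C) (hg₃ : ‖g₃‖ ≤ C) (hg₄ : ‖g₄‖ ≤ C) :
    ‖a * g₁ + (-1) ^ (m + 1) * (b₂ * g₂) + (-1) ^ m * (b₃ * g₃) - b₄ * g₄‖ ≤ δ * C := by
  have hsq : ((-1 : 𝕜) ^ m) ^ 2 = 1 := by rw [← pow_mul, mul_comm, pow_mul]; simp
  have hunit : ‖(-1 : 𝕜) ^ m‖ = 1 := by simp
  have hprod : ∀ {b g : 𝕜}, ‖b‖ ≤ δ → ‖g‖ ≤ C → ‖b * g‖ ≤ δ * C := fun hb hg =>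
    (norm_mul_le _ _).trans (mul_le_mul hb hg (norm_nonneg _) ((norm_nonneg _).trans hb))
  have key : a * g₁ + (-1) ^ (m + 1) * (b₂ * g₂) + (-1) ^ m * (b₃ * g₃) - b₄ * g₄
      = (-1) ^ m * -((b₂ - (-1) ^ m * a) * g₂) + (-1) ^ m * ((b₃ - (-1) ^ m * a) * g₃)
        + -((b₄ - a) * g₄) := by
    linear_combination a * hg + (a * g₃ - a * g₂) * hsq
  rw [key]
  refine (IsUltrametricDist.norm_add_le_max _ _).trans (max_le
    ((IsUltrametricDist.norm_add_le_max _ _).trans (max_le ?_ ?_)) ?_)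
  · rw [norm_mul, hunit, one_mul, norm_neg]; exact hprod hb₂ hg₂
  · rw [norm_mul, hunit, one_mul]; exact hprod hb₃ hg₃
  · rw [norm_neg]; exact hprod hb₄ hg₄

section Padic

theorem PadicInt.norm_sub_le_of_toZModPow_eq {x y : ℤ_[p]} {N : ℕ}
    (h : PadicInt.toZModPow N x = PadicInt.toZModPow N y) : ‖x - y‖ ≤ (p : ℝ) ^ (-N : ℤ) := by
  rw [PadicInt.norm_le_pow_iff_mem_span_pow, ← PadicInt.ker_toZModPow, RingHom.mem_ker,
    map_sub, h, sub_self]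

theorem PadicInt.toZModPow_natCast_val {N : ℕ} (a : ZMod (p ^ N)) :
    PadicInt.toZModPow N (a.val : ℤ_[p]) = a := by
  have : NeZero (p ^ N) := ⟨pow_ne_zero _ (Fact.out : p.Prime).ne_zero⟩
  rw [map_natCast, ZMod.natCast_val, ZMod.cast_id]

variable {r : ℕ} (e : Fin (r + 1) → ℕ) {N : ℕ}

theorem toZModPow_chainMonomial_val (c : ℤ_[p]) (z : Fin (r + 1) → ZMod (p ^ N)) :
    PadicInt.toZModPow N (chainMonomial e c (fun j => ((z j).val : ℤ_[p])))
      = chainMonomial e (PadicInt.toZModPow N c) z := by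
  simp only [map_chainMonomial, PadicInt.toZModPow_natCast_val]

theorem norm_chainMonomial_val_neg_sub_le (z : Fin (r + 1) → ZMod (p ^ N)) :
    ‖chainMonomial e 0 (fun j => ((-z j).val : ℤ_[p]))
      - (-1) ^ (∑ j, e j) * chainMonomial e 0 (fun j => ((z j).val : ℤ_[p]))‖
      ≤ (p : ℝ) ^ (-N : ℤ) := by
  refine PadicInt.norm_sub_le_of_toZModPow_eq ?_
  rw [map_mul, toZModPow_chainMonomial_val, toZModPow_chainMonomial_val]
  exact (chainMonomial_neg e _ z).trans (by simp)

theorem norm_chainMonomial_val_one_sub_sub_le (z : Fin (r + 1) → ZMod (p ^ N)) :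
    ‖chainMonomial e (-1) (fun j => ((-z j + 1).val : ℤ_[p]))
      - (-1) ^ (∑ j, e j) * chainMonomial e 0 (fun j => ((z j).val : ℤ_[p]))‖
      ≤ (p : ℝ) ^ (-N : ℤ) := by
  refine PadicInt.norm_sub_le_of_toZModPow_eq ?_
  rw [map_mul, toZModPow_chainMonomial_val, toZModPow_chainMonomial_val, map_neg, map_one,
    map_zero, map_pow, map_neg, map_one]
  calc chainMonomial e (-1) (fun j => -z j + 1) = chainMonomial e 0 (-z) := by
        simpa using chainMonomial_add_const e (-1) 1 (-z)
    _ = _ := by simp [chainMonomial_neg]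

theorem norm_chainMonomial_val_sub_one_sub_le (z : Fin (r + 1) → ZMod (p ^ N)) :
    ‖chainMonomial e 1 (fun j => ((z j - 1).val : ℤ_[p]))
      - chainMonomial e 0 (fun j => ((z j).val : ℤ_[p]))‖ ≤ (p : ℝ) ^ (-N : ℤ) := by
  refine PadicInt.norm_sub_le_of_toZModPow_eq ?_
  rw [toZModPow_chainMonomial_val, toZModPow_chainMonomial_val]
  simp only [sub_eq_add_neg, chainMonomial_add_const, map_one, neg_add_cancel, map_zero]

end Padic

namespace PadicMeasureV

variable {r : ℕ}

noncomputable def cosetSum (μ : PadicMeasureV p r) (f : (Fin r → ℤ_[p]) → ℚ_[p]) (n : ℕ)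
    (i : Fin r → ZMod (p ^ n)) (k : ℕ) : ℚ_[p] :=
  ∑ y ∈ Finset.univ.filter
      (fun y : Fin r → ZMod (p ^ (n + k)) =>
        (fun j => ZMod.castHom (pow_dvd_pow p (Nat.le_add_right n k)) (ZMod (p ^ n)) (y j)) = i),
    f (fun j => ((y j).val : ℤ_[p])) * μ.val (n + k) y

theorem HasIntegralOn.tendsto_cosetSum {μ : PadicMeasureV p r} {f : (Fin r → ℤ_[p]) → ℚ_[p]}
    {n : ℕ} {i : Fin r → ZMod (p ^ n)} {c : ℚ_[p]} (h : μ.HasIntegralOn f n i c) :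
    Tendsto (μ.cosetSum f n i) atTop (𝓝 c) :=
  h

theorem norm_cosetSum_symmetric_combination_le (G : PadicMeasureV p (r + 1))
    (hsym : ∀ (N : ℕ) (i : Fin (r + 1) → ZMod (p ^ N)),
      G.val N i - G.val N (fun j => -(i j)) + G.val N (fun j => -(i j) + 1)
        - G.val N (fun j => i j - 1) = 0)
    {C : ℝ} (hC : ∀ (N : ℕ) (x : Fin (r + 1) → ZMod (p ^ N)), ‖G.val N x‖ ≤ C)
    (e : Fin (r + 1) → ℕ) (n : ℕ) (i : Fin (r + 1) → ZMod (p ^ n)) (k : ℕ) :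
    ‖G.cosetSum (fun x => ((chainMonomial e 0 x : ℤ_[p]) : ℚ_[p])) n i k
      + (-1) ^ (∑ j, e j + 1) * G.cosetSum (fun x => ((chainMonomial e 0 x : ℤ_[p]) : ℚ_[p])) n
          (fun j => -(i j)) k
      + (-1) ^ (∑ j, e j) * G.cosetSum (fun x => ((chainMonomial e (-1) x : ℤ_[p]) : ℚ_[p])) n
          (fun j => -(i j) + 1) k
      - G.cosetSum (fun x => ((chainMonomial e 1 x : ℤ_[p]) : ℚ_[p])) n (fun j => i j - 1) k‖
      ≤ (p : ℝ) ^ (-(n + k : ℕ) : ℤ) * C := by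
  set π := ZMod.castHom (pow_dvd_pow p (Nat.le_add_right n k)) (ZMod (p ^ n))
  have hC₀ : 0 ≤ C := (norm_nonneg _).trans (hC 0 0)
  simp only [cosetSum]
  rw [sum_fiber_eq_sum_fiber_comp_of_semiconj π (σ := fun a => -a) (τ := fun a => -a)
      (Equiv.neg _).bijective neg_injective (fun a => map_neg π a),
    sum_fiber_eq_sum_fiber_comp_of_semiconj π (σ := fun a => -a + 1) (τ := fun a => -a + 1)
      ((Equiv.neg _).trans (Equiv.addRight 1)).bijective
      ((add_left_injective 1).comp neg_injective) (fun a => by simp),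
    sum_fiber_eq_sum_fiber_comp_of_semiconj π (σ := fun a => a - 1) (τ := fun a => a - 1)
      (Equiv.subRight 1).bijective sub_left_injective (fun a => by simp),
    Finset.mul_sum, Finset.mul_sum, ← Finset.sum_add_distrib, ← Finset.sum_add_distrib,
    ← Finset.sum_sub_distrib]
  refine IsUltrametricDist.norm_sum_le_of_forall_le_of_nonneg (by positivity) fun z _ => ?_
  refine norm_symmetric_combination_le (∑ j, e j) (hsym _ z) ?_ ?_ ?_ (hC _ _) (hC _ _) (hC _ _)
  · exact_mod_cast norm_chainMonomial_val_neg_sub_le e z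
  · exact_mod_cast norm_chainMonomial_val_one_sub_sub_le e z
  · exact_mod_cast norm_chainMonomial_val_sub_one_sub_le e z

end PadicMeasureV

/-- Under the rhombus symmetry of `G`, the four coset integrals of
`φ(x) = (x₁−x₂)^{n₁}⋯(x_{r−1}−x_r)^{n_{r−1}} x_r^{n_r}` (and its shifted variants `φ∓`)
over the cosets of `(i₁,…,i_r)`, `(−i₁,…,−i_r)`, `(−i₁+1,…,−i_r+1)`, `(i₁−1,…,i_r−1)`
satisfy `c₁ + (−1)^{m+1} c₂ + (−1)^m c₃ − c₄ = 0`, where `m = n₁+⋯+n_r`. -/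
theorem coset_integral_relation (p : ℕ) [Fact p.Prime] (r : ℕ)
    (G : PadicMeasureV p (r + 1))
    (hsym : ∀ (N : ℕ) (i : Fin (r + 1) → ZMod (p ^ N)),
      G.val N i - G.val N (fun j => -(i j)) + G.val N (fun j => -(i j) + 1)
        - G.val N (fun j => i j - 1) = 0)
    (e : Fin (r + 1) → ℕ) (m : ℕ) (hm : m = ∑ j, e j)
    (n : ℕ) (i : Fin (r + 1) → ZMod (p ^ n)) (c₁ c₂ c₃ c₄ : ℚ_[p])
    (h₁ : G.HasIntegralOn (fun x =>
      (∏ j : Fin r, ((x j.castSucc : ℚ_[p]) - (x j.succ : ℚ_[p])) ^ e j.castSucc)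
        * (x (Fin.last r) : ℚ_[p]) ^ e (Fin.last r)) n i c₁)
    (h₂ : G.HasIntegralOn (fun x =>
      (∏ j : Fin r, ((x j.castSucc : ℚ_[p]) - (x j.succ : ℚ_[p])) ^ e j.castSucc)
        * (x (Fin.last r) : ℚ_[p]) ^ e (Fin.last r)) n (fun j => -(i j)) c₂)
    (h₃ : G.HasIntegralOn (fun x =>
      (∏ j : Fin r, ((x j.castSucc : ℚ_[p]) - (x j.succ : ℚ_[p])) ^ e j.castSucc)
        * ((x (Fin.last r) : ℚ_[p]) - 1) ^ e (Fin.last r)) n (fun j => -(i j) + 1) c₃)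
    (h₄ : G.HasIntegralOn (fun x =>
      (∏ j : Fin r, ((x j.castSucc : ℚ_[p]) - (x j.succ : ℚ_[p])) ^ e j.castSucc)
        * ((x (Fin.last r) : ℚ_[p]) + 1) ^ e (Fin.last r)) n (fun j => i j - 1) c₄) :
    c₁ + (-1 : ℚ_[p]) ^ (m + 1) * c₂ + (-1 : ℚ_[p]) ^ m * c₃ - c₄ = 0 := by
  subst hm
  obtain ⟨C, hC⟩ := G.bounded
  have hφ : ∀ c : ℤ_[p], (fun x => ((chainMonomial e c x : ℤ_[p]) : ℚ_[p]))
      = fun x => (∏ j : Fin r, ((x j.castSucc : ℚ_[p]) - (x j.succ : ℚ_[p])) ^ e j.castSucc)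
        * ((x (Fin.last r) : ℚ_[p]) + c) ^ e (Fin.last r) :=
    fun c => funext fun x => map_chainMonomial PadicInt.Coe.ringHom e c x
  have hL := ((h₁.tendsto_cosetSum.add
    (h₂.tendsto_cosetSum.const_mul ((-1) ^ (∑ j, e j + 1)))).add
      (h₃.tendsto_cosetSum.const_mul ((-1) ^ ∑ j, e j))).sub h₄.tendsto_cosetSum
  have hδ : Tendsto (fun k : ℕ => (p : ℝ) ^ (-(n + k : ℕ) : ℤ) * C) atTop (𝓝 0) := by
    have hp : (1 : ℝ) < p := mod_cast (Fact.out : p.Prime).one_lt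
    have hgeom := tendsto_pow_atTop_nhds_zero_of_lt_one (by positivity) (inv_lt_one_of_one_lt₀ hp)
    refine (zero_mul ((p : ℝ)⁻¹ ^ n * C) ▸ hgeom.mul_const _).congr fun k => ?_
    rw [zpow_neg, zpow_natCast, ← inv_pow, pow_add]
    ring
  refine tendsto_nhds_unique hL (squeeze_zero_norm (fun k => ?_) hδ)
  simpa [hφ, ← sub_eq_add_neg] using G.norm_cosetSum_symmetric_combination_le hsym hC e n i k
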